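/- arXiv:2512.08377 — 3 statements merged into one kernel-verified Lean document; each statement's English description precedes it below -/
import Mathlib

section
/- The coefficient of z^{2p} in (1-z)^{2p}(1+z)^{2p-1} equals (-1)^p * C(2p-1, p), for all positive integers p. -/
open Polynomial Finset

lemma aux (n k : ℕ) : ((1 - X ^ 2 : ℤ[X]) ^ n).coeff k =
    if 2 ∣ k then (-1) ^ (k / 2) * (n.choose (k / 2) : ℤ) else 0 := by
  rw [sub_pow, finset_sum_coeff]
  have hc : ∀ m ∈ range (n + 1), (((-1 : ℤ[X]) ^ (m + n) * 1 ^ m * (X ^ 2) ^ (n - m) * (n.choose m : ℤ[X])).coeff k) =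
      if 2 * (n - m) = k then (-1 : ℤ) ^ (m + n) * n.choose m else 0 := by
    intro m hm
    have : ((-1 : ℤ[X]) ^ (m + n) * 1 ^ m * (X ^ 2) ^ (n - m) * (n.choose m : ℤ[X]))
        = C ((-1 : ℤ) ^ (m + n) * n.choose m) * X ^ (2 * (n - m)) := by
      push_cast
      rw [one_pow, mul_one, ← pow_mul, map_mul, map_pow, map_neg, map_one, map_natCast]
      ring
    rw [this, coeff_C_mul, coeff_X_pow, mul_ite, mul_one, mul_zero]
    simp [eq_comm]
  rw [Finset.sum_congr rfl hc]
  by_cases hd : 2 ∣ k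
  · obtain ⟨j, rfl⟩ := hd
    rw [if_pos ⟨j, rfl⟩]
    rw [Nat.mul_div_cancel_left _ (by norm_num)]
    by_cases hj : j ≤ n
    · rw [Finset.sum_eq_single (n - j)]
      · rw [if_pos (by omega)]
        congr 1
        · have : n - j + n = 2 * (n - j) + j := by omega
          rw [this, pow_add, pow_mul]; norm_num
        · rw [Nat.choose_symm hj]
      · intro m hm hne
        rw [if_neg]; simp at hm; omega
      · intro h; simp at h
    · rw [Finset.sum_eq_zero, Nat.choose_eq_zero_of_lt (by omega), Nat.cast_zero, mul_zero]
      intro m hm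
      rw [if_neg]; simp at hm; omega
  · rw [if_neg hd, Finset.sum_eq_zero]
    intro m hm
    rw [if_neg]
    intro h; exact hd ⟨n - m, h.symm⟩

theorem stmt_0 (p : ℕ) (hp : 0 < p) :
    ((1 - X : ℤ[X]) ^ (2 * p) * (1 + X) ^ (2 * p - 1)).coeff (2 * p) =
      (-1 : ℤ) ^ p * ((2 * p - 1).choose p : ℤ) := by
  have h1 : ((1 - X : ℤ[X]) ^ (2 * p) * (1 + X) ^ (2 * p - 1))
      = (1 - X) * (1 - X ^ 2) ^ (2 * p - 1) := by
    have h2 : 2 * p = 1 + (2 * p - 1) := by omega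
    rw [h2, pow_add, pow_one, Nat.add_sub_cancel_left, mul_assoc, ← mul_pow]
    ring_nf
  rw [h1, sub_mul, one_mul, coeff_sub]
  have h3 : 2 * p = (2 * p - 1) + 1 := by omega
  rw [h3, coeff_X_mul, ← h3, aux, aux, if_pos ⟨p, rfl⟩, if_neg (by omega),
    Nat.mul_div_cancel_left _ (by norm_num), sub_zero]
end

section
/- For all positive integers p, the alternating sum ∑_{j=0}^{2p} (-1)^j C(2p, j) C(2p-1, 2p-j) equals (-1)^p C(2p-1, p). -/
open Polynomial Finset

lemma coeff_one_sub_X_pow (n k : ℕ) :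
    ((1 - X : ℤ[X]) ^ n).coeff k = (-1) ^ k * n.choose k := by
  have h : (1 - X : ℤ[X]) ^ n = ∑ i ∈ range (n + 1),
      C ((-1 : ℤ) ^ i * n.choose i) * X ^ i := by
    rw [sub_eq_add_neg, add_comm, add_pow]
    apply Finset.sum_congr rfl
    intro i hi
    simp only [one_pow, mul_one, map_mul, map_pow, map_natCast, map_neg, map_one]
    ring
  rw [h, finset_sum_coeff]
  simp only [coeff_C_mul, coeff_X_pow]
  rcases le_or_gt k n with hk | hk
  · rw [Finset.sum_eq_single k]
    · simp
    · intro b _ hb; simp [hb.symm]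
    · intro h'; exact absurd (Finset.mem_range.2 (Nat.lt_succ_of_le hk)) h'
  · rw [Finset.sum_eq_zero, Nat.choose_eq_zero_of_lt hk]
    · simp
    · intro b hb
      simp only [Finset.mem_range] at hb
      have : ¬ (k = b) := by omega
      simp [this]

lemma coeff_one_sub_X_sq_pow (n k : ℕ) :
    ((1 - X ^ 2 : ℤ[X]) ^ n).coeff k =
      if k % 2 = 0 then ((-1 : ℤ) ^ (k / 2) * n.choose (k / 2)) else 0 := by
  have h : (1 - X ^ 2 : ℤ[X]) ^ n = ∑ i ∈ range (n + 1),
      C ((-1 : ℤ) ^ i * n.choose i) * X ^ (2 * i) := by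
    rw [sub_eq_add_neg, add_comm, add_pow]
    apply Finset.sum_congr rfl
    intro i hi
    simp only [one_pow, mul_one, map_mul, map_pow, map_natCast, map_neg, map_one]
    rw [show (2 : ℕ) * i = i * 2 from mul_comm 2 i, pow_mul]
    ring
  rw [h, finset_sum_coeff]
  simp only [coeff_C_mul, coeff_X_pow]
  split
  · rename_i he
    rcases le_or_gt (k / 2) n with hk | hk
    · rw [Finset.sum_eq_single (k / 2)]
      · have h2 : k = 2 * (k / 2) := by omega
        simp [← h2]
      · intro b _ hb
        have : ¬ (k = 2 * b) := by omega
        simp [this]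
      · intro h'; exact absurd (Finset.mem_range.2 (Nat.lt_succ_of_le hk)) h'
    · rw [Finset.sum_eq_zero, Nat.choose_eq_zero_of_lt hk]
      · simp
      · intro b hb
        simp only [Finset.mem_range] at hb
        have : ¬ (k = 2 * b) := by omega
        simp [this]
  · rename_i he
    apply Finset.sum_eq_zero
    intro b hb
    have : ¬ (k = 2 * b) := by omega
    simp [this]

theorem stmt_1 (p : ℕ) (hp : 0 < p) :
    ∑ j ∈ Finset.range (2 * p + 1),
        (-1 : ℤ) ^ j * ((2 * p).choose j) * ((2 * p - 1).choose (2 * p - j)) =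
      (-1) ^ p * ((2 * p - 1).choose p) := by
  obtain ⟨m, hm⟩ : ∃ m, 2 * p = m + 1 := ⟨2 * p - 1, by omega⟩
  have hm' : 2 * p - 1 = m := by omega
  rw [hm]
  simp only [Nat.add_sub_cancel]
  have key : ∑ j ∈ Finset.range (m + 1 + 1),
      (-1 : ℤ) ^ j * ((m + 1).choose j) * (m.choose (m + 1 - j)) =
      ((1 - X : ℤ[X]) ^ (m + 1) * (1 + X) ^ m).coeff (m + 1) := by
    rw [coeff_mul, Finset.Nat.sum_antidiagonal_eq_sum_range_succ_mk]
    apply Finset.sum_congr rfl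
    intro j hj
    rw [coeff_one_sub_X_pow, coeff_one_add_X_pow]
  rw [key]
  have hfac : (1 - X : ℤ[X]) ^ (m + 1) * (1 + X) ^ m
      = (1 - X ^ 2) ^ m - X * (1 - X ^ 2) ^ m := by
    have h1 : (1 - X : ℤ[X]) ^ (m + 1) * (1 + X) ^ m
        = (1 - X) * ((1 - X) * (1 + X)) ^ m := by
      rw [mul_pow, pow_succ]; ring
    rw [h1, show ((1 : ℤ[X]) - X) * (1 + X) = 1 - X ^ 2 by ring]
    ring
  rw [hfac, coeff_sub, coeff_X_mul, coeff_one_sub_X_sq_pow, coeff_one_sub_X_sq_pow]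
  have e1 : (m + 1) % 2 = 0 := by omega
  have e2 : m % 2 = 1 := by omega
  have e3 : (m + 1) / 2 = p := by omega
  rw [e1, e2, e3]
  simp
end

section
/- For all positive integers p: K(2p+1, 2p; 4p-1) = -(-1)^p C(2p-1,p), K(2p+1, 2p; 4p) = 0, K(2p+1, 2p; 4p+1) = 2·(-1)^p C(2p-1,p), and K(2p+1, 2p; 4p+2) = 4·(-1)^p C(2p-1,p). -/
open Polynomial Finset


lemma expand_sq (m : ℕ) : (1 - X^2 : ℤ[X])^m =
    ∑ k ∈ Finset.range (m+1), C ((-1)^k * (m.choose k : ℤ)) * X^(2*k) := by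
  rw [sub_eq_add_neg, add_comm, add_pow]
  apply Finset.sum_congr rfl
  intro k _
  rw [neg_pow, one_pow, map_mul, map_pow, map_neg, map_one, map_natCast, pow_mul]
  ring

lemma coeff_sq (m a : ℕ) : ((1 - X^2 : ℤ[X])^m).coeff a =
    if 2 ∣ a then (-1)^(a/2) * (m.choose (a/2) : ℤ) else 0 := by
  rw [expand_sq, finset_sum_coeff]
  simp only [coeff_C_mul, coeff_X_pow, mul_ite, mul_one, mul_zero]
  by_cases h : 2 ∣ a
  · obtain ⟨j, rfl⟩ := h
    simp only [if_pos (dvd_mul_right 2 j)]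
    rw [Nat.mul_div_cancel_left j (by norm_num)]
    rw [Finset.sum_eq_single j]
    · simp
    · intro b _ hb
      rw [if_neg (by omega)]
    · intro hj
      simp only [Finset.mem_range, not_lt] at hj
      rw [if_pos rfl, Nat.choose_eq_zero_of_lt (by omega)]
      simp
  · rw [if_neg h]
    apply Finset.sum_eq_zero
    intro b _
    rw [if_neg (by omega)]

lemma coeff_mul_onesub (f : ℤ[X]) (k : ℕ) :
    (f * (1 - X)).coeff (k+1) = f.coeff (k+1) - f.coeff k := by
  rw [mul_sub, mul_one, coeff_sub, coeff_mul_X]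

lemma coeff_mul_oneadd (f : ℤ[X]) (k : ℕ) :
    (f * (1 + X)).coeff (k+1) = f.coeff (k+1) + f.coeff k := by
  rw [mul_add, mul_one, coeff_add, coeff_mul_X]

lemma choose_id (q : ℕ) : (2*q+2).choose (q+1) = 2 * ((2*q+1).choose (q+1)) := by
  have h1 : (2*q+1).choose (2*q+1-(q+1)) = (2*q+1).choose (q+1) :=
    Nat.choose_symm (by omega)
  rw [show 2*q+1-(q+1) = q by omega] at h1
  rw [show 2*q+2 = (2*q+1)+1 from rfl, Nat.choose_succ_succ, h1]
  simp only [Nat.succ_eq_add_one]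
  omega


/-- The Kravchuk polynomial `K(a, b; n)`: the coefficient of `z^a` in
`(1+z)^(n-b) * (1-z)^b`. -/
noncomputable def kravchuk (a b n : ℕ) : ℤ :=
  ((1 + X : ℤ[X]) ^ (n - b) * (1 - X) ^ b).coeff a

theorem stmt_7 (p : ℕ) (hp : 0 < p) :
    kravchuk (2 * p + 1) (2 * p) (4 * p - 1) = -((-1) ^ p * ((2 * p - 1).choose p)) ∧
    kravchuk (2 * p + 1) (2 * p) (4 * p) = 0 ∧
    kravchuk (2 * p + 1) (2 * p) (4 * p + 1) = 2 * (-1) ^ p * ((2 * p - 1).choose p) ∧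
    kravchuk (2 * p + 1) (2 * p) (4 * p + 2) = 4 * (-1) ^ p * ((2 * p - 1).choose p) := by
  obtain ⟨q, rfl⟩ : ∃ q, p = q + 1 := ⟨p - 1, by omega⟩
  unfold kravchuk
  rw [show 4*(q+1)-1 - 2*(q+1) = 2*q+1 by omega,
      show 4*(q+1) - 2*(q+1) = 2*q+2 by omega,
      show 4*(q+1)+1 - 2*(q+1) = 2*q+3 by omega,
      show 4*(q+1)+2 - 2*(q+1) = 2*q+4 by omega,
      show 2*(q+1)+1 = (2*q+2)+1 by omega,
      show 2*(q+1)-1 = 2*q+1 by omega]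
  have key : ∀ n : ℕ, (1+X:ℤ[X])^n * (1-X)^n = (1-X^2)^n := by
    intro n; rw [← mul_pow]; ring_nf
  have e1 : (1+X:ℤ[X])^(2*q+1) * (1-X)^(2*(q+1)) = (1-X^2)^(2*q+1) * (1-X) := by
    rw [show 2*(q+1) = (2*q+1)+1 by omega, pow_succ (1-X:ℤ[X]), ← mul_assoc, key]
  have e2 : (1+X:ℤ[X])^(2*q+2) * (1-X)^(2*(q+1)) = (1-X^2)^(2*q+2) := by
    rw [show 2*(q+1) = 2*q+2 by omega, key]
  have e3 : (1+X:ℤ[X])^(2*q+3) * (1-X)^(2*(q+1)) = (1-X^2)^(2*q+2) * (1+X) := by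
    rw [show 2*q+3 = (2*q+2)+1 by omega, show 2*(q+1) = 2*q+2 by omega,
        pow_succ (1+X:ℤ[X]), mul_right_comm, key]
  have e4 : (1+X:ℤ[X])^(2*q+4) * (1-X)^(2*(q+1)) = (1-X^2)^(2*q+2) * (1+X) * (1+X) := by
    rw [show 2*q+4 = ((2*q+2)+1)+1 by omega, show 2*(q+1) = 2*q+2 by omega,
        pow_succ (1+X:ℤ[X]) ((2*q+2)+1), pow_succ (1+X:ℤ[X]) (2*q+2), mul_right_comm,
        mul_right_comm ((1+X:ℤ[X])^(2*q+2)) (1+X) ((1-X)^(2*q+2)), key]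
  have c1 : ((1-X^2:ℤ[X])^(2*q+1)).coeff (2*q+3) = 0 := by
    rw [coeff_sq, if_neg (by omega)]
  have c2 : ((1-X^2:ℤ[X])^(2*q+1)).coeff (2*q+2) = (-1)^(q+1) * ((2*q+1).choose (q+1)) := by
    rw [coeff_sq, if_pos (by omega), show (2*q+2)/2 = q+1 by omega]
  have c3 : ((1-X^2:ℤ[X])^(2*q+2)).coeff (2*q+3) = 0 := by
    rw [coeff_sq, if_neg (by omega)]
  have c4 : ((1-X^2:ℤ[X])^(2*q+2)).coeff (2*q+2) = (-1)^(q+1) * ((2*q+2).choose (q+1)) := by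
    rw [coeff_sq, if_pos (by omega), show (2*q+2)/2 = q+1 by omega]
  have c5 : ((1-X^2:ℤ[X])^(2*q+2)).coeff (2*q+1) = 0 := by
    rw [coeff_sq, if_neg (by omega)]
  refine ⟨?_, ?_, ?_, ?_⟩
  · rw [e1, coeff_mul_onesub, c1, c2]; ring
  · rw [e2, coeff_sq, if_neg (by omega)]
  · rw [e3, coeff_mul_oneadd, c3, c4, choose_id]
    push_cast; ring
  · rw [e4, coeff_mul_oneadd]
    rw [coeff_mul_oneadd, c3, c4, show 2*q+2 = (2*q+1)+1 from rfl, coeff_mul_oneadd]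
    rw [show (2*q+1)+1 = 2*q+2 from rfl, c4, c5, choose_id]
    push_cast; ring
end
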